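/- arXiv:math/0511485 — 4 statements merged into one kernel-verified Lean document; each statement's English description precedes it below -/
import Mathlib

section
/- (Proposition: p-adic valuation versus point counts over finite fields.) Let p be a prime number, ν ≥ 1 an integer, and z ∈ ℤ. Let W̄ denote the reduction modulo p of the Laurent polynomial W, a Laurent polynomial over 𝔽_{p^ν}, and set M = #{ξ ∈ ((𝔽_{p^ν})^×)^n : W̄(ξ) = z̄ in 𝔽_{p^ν}}, where z̄ is the image of z in 𝔽_{p^ν}. Then p^M divides the integer B_{p^ν−1}(z) in ℤ. -/
/-!
`B_N(z)` is the value at a primitive `N`-th root of unity `ω ∈ ℂ` of the integer polynomial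
`F = ∏_{v ∈ (ℤ/N)^n} (z - W(X^v))`. As `Φ_N` is the minimal polynomial of `ω` over `ℤ`,
`Φ_N ∣ F - B_N(z)`, so `F` takes the value `B_N(z)` at every root of `Φ_N` in every ring. For
`N = p^ν - 1` such a root is the Teichmüller lift `t ∈ W(𝔽_{p^ν})` of a generator of `𝔽_{p^ν}^×`.
Reducing mod `p`, the factors `z - W(t^v)` divisible by `p` correspond exactly to the `M` points
with `W̄(ξ) = z̄`, so `p^M ∣ B_N(z)` in `W(𝔽_{p^ν})`, hence in `ℤ`.
-/

open scoped BigOperators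

/-- The evaluation of the Laurent polynomial `W(u) = ∑_{e,f ∈ E} c_e c_f u^{e-f}`
at a point `ζ` of the complex torus. -/
noncomputable def Weval {n : ℕ} (E : Finset (Fin n → ℤ)) (c : (Fin n → ℤ) → ℕ)
    (ζ : Fin n → ℂ) : ℂ :=
  ∑ e ∈ E, ∑ f ∈ E, ((c e : ℂ) * (c f : ℂ)) * ∏ j, ζ j ^ (e j - f j)

/-- The finite subgroup `(μ_N)^n` of the complex torus, as a `Finset`. -/
noncomputable def torus (n N : ℕ) : Finset (Fin n → ℂ) :=
  Fintype.piFinset fun _ => Polynomial.nthRootsFinset N (1 : ℂ)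

/-- The evaluation of (the reduction of) the Laurent polynomial
`W(u) = ∑_{e,f ∈ E} c_e c_f u^{e-f}` at an `n`-tuple of units of a commutative ring `K`. -/
def WevalUnits {n : ℕ} (E : Finset (Fin n → ℤ)) (c : (Fin n → ℤ) → ℕ)
    {K : Type*} [CommRing K] (ξ : Fin n → Kˣ) : K :=
  ∑ e ∈ E, ∑ f ∈ E, ((c e * c f : ℕ) : K) * ∏ j, ((ξ j ^ (e j - f j) : Kˣ) : K)

open Polynomial Finset

theorem zpow_eq_pow_val_intCast {G : Type*} [Group G] {u : G} {N : ℕ} [NeZero N]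
    (hu : u ^ N = 1) (m : ℤ) : u ^ m = u ^ (m : ZMod N).val := by
  rw [← zpow_natCast, ZMod.val_intCast, ← zpow_eq_zpow_emod' m hu]

theorem Finset.pow_card_filter_dvd_prod {ι α : Type*} [CommMonoid α] {s : Finset ι}
    {P : ι → Prop} [DecidablePred P] {f : ι → α} {a : α} (h : ∀ i ∈ s, P i → a ∣ f i) :
    a ^ #(s.filter P) ∣ ∏ i ∈ s, f i :=
  calc a ^ #(s.filter P) = ∏ _i ∈ s.filter P, a := (prod_const a).symm
    _ ∣ ∏ i ∈ s.filter P, f i :=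
      prod_dvd_prod_of_dvd _ _ fun i hi => h i (mem_filter.1 hi).1 (mem_filter.1 hi).2
    _ ∣ ∏ i ∈ s, f i := prod_dvd_prod_of_subset _ _ _ (filter_subset _ _)

theorem IsCyclic.exists_isPrimitiveRoot_natCard (G : Type*) [CommGroup G] [IsCyclic G] :
    ∃ g : G, IsPrimitiveRoot g (Nat.card G) :=
  exists_ofOrder_eq_natCard.imp fun g (hg : orderOf g = Nat.card G) =>
    hg ▸ IsPrimitiveRoot.orderOf g

namespace IsPrimitiveRoot

variable {N : ℕ} [NeZero N]

theorem pow_val_injective {M : Type*} [CommMonoid M] {ζ : M} (hζ : IsPrimitiveRoot ζ N) :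
    Function.Injective fun v : ZMod N => ζ ^ v.val :=
  fun v w h => ZMod.val_injective N (hζ.pow_inj (ZMod.val_lt v) (ZMod.val_lt w) h)

theorem pow_val_bijective {G : Type*} [CommGroup G] [Finite G] {ζ : G}
    (hζ : IsPrimitiveRoot ζ (Nat.card G)) :
    Function.Bijective fun v : ZMod (Nat.card G) => ζ ^ v.val :=
  hζ.pow_val_injective.bijective_of_nat_card_le (by simp)

theorem nthRootsFinset_eq_image {R : Type*} [CommRing R] [IsDomain R] [DecidableEq R] {ζ : R}
    (hζ : IsPrimitiveRoot ζ N) :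
    nthRootsFinset N (1 : R) = univ.image fun v : ZMod N => ζ ^ v.val := by
  ext x
  rw [Polynomial.mem_nthRootsFinset (NeZero.pos N), mem_image]
  constructor
  · intro hx
    obtain ⟨i, hi, rfl⟩ := hζ.eq_pow_of_pow_eq_one hx
    exact ⟨i, mem_univ _, by rw [ZMod.val_cast_of_lt hi]⟩
  · rintro ⟨v, -, rfl⟩
    rw [← pow_mul, mul_comm, pow_mul, hζ.pow_eq_one, one_pow]

theorem aeval_cyclotomic_eq_zero {R : Type*} [CommRing R] [IsDomain R] {ζ : R}
    (hζ : IsPrimitiveRoot ζ N) : aeval ζ (cyclotomic N ℤ) = 0 := by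
  rw [aeval_def, eval₂_eq_eval_map, map_cyclotomic]
  exact hζ.isRoot_cyclotomic (NeZero.pos N)

end IsPrimitiveRoot

namespace WittVector

section Teichmuller

variable (p : ℕ) [Fact p.Prime] {R : Type*} [CommRing R]

theorem constantCoeff_teichmuller (r : R) : constantCoeff (teichmuller p r) = r :=
  teichmuller_coeff_zero p r

theorem teichmuller_injective : Function.Injective (teichmuller p : R → WittVector p R) :=
  Function.LeftInverse.injective (constantCoeff_teichmuller p)

end Teichmuller

section PerfectRing

variable {p : ℕ} [Fact p.Prime] {k : Type*} [CommRing k] [CharP k p] [PerfectRing k p]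

theorem p_dvd_iff_constantCoeff_eq_zero (x : WittVector p k) :
    (p : WittVector p k) ∣ x ↔ constantCoeff x = 0 := by
  rw [← Ideal.mem_span_singleton, ← ker_constantCoeff, RingHom.mem_ker]

theorem pow_p_dvd_intCast_iff [IsDomain k] {M : ℕ} {b : ℤ} :
    (p : WittVector p k) ^ M ∣ (b : WittVector p k) ↔ (p : ℤ) ^ M ∣ b := by
  refine ⟨fun h => ?_, fun h => by exact_mod_cast map_dvd (Int.castRingHom (WittVector p k)) h⟩
  induction M generalizing b with
  | zero => exact one_dvd b
  | succ M ih =>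
    have hp : (p : ℤ) ∣ b := by
      rw [← CharP.intCast_eq_zero_iff k p, ← map_intCast (constantCoeff (p := p) (R := k)),
        ← p_dvd_iff_constantCoeff_eq_zero]
      exact (dvd_pow_self _ M.succ_ne_zero).trans h
    obtain ⟨b, rfl⟩ := hp
    rw [pow_succ', Int.cast_mul, Int.cast_natCast,
      mul_dvd_mul_iff_left (p_nonzero p k)] at h
    rw [pow_succ']
    exact mul_dvd_mul_left _ (ih h)

end PerfectRing

end WittVector

theorem aeval_eq_intCast_of_aeval_cyclotomic_eq_zero {N : ℕ} [NeZero N] {K : Type*} [Field K]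
    [CharZero K] {ω : K} (hω : IsPrimitiveRoot ω N) {f : ℤ[X]} {b : ℤ} (hf : aeval ω f = b)
    {R : Type*} [CommRing R] {x : R} (hx : aeval x (cyclotomic N ℤ) = 0) :
    aeval x f = b := by
  have hdvd : cyclotomic N ℤ ∣ f - C b := by
    rw [cyclotomic_eq_minpoly hω (NeZero.pos N)]
    refine minpoly.isIntegrallyClosed_dvd (hω.isIntegral (NeZero.pos N)) ?_
    rw [map_sub, hf, aeval_C, eq_intCast, sub_self]
  obtain ⟨g, hg⟩ := hdvd
  simpa [hx, sub_eq_zero] using congrArg (aeval x) hg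

theorem prod_torus_eq_prod_zmod {n N : ℕ} [NeZero N] {ω : ℂ} (hω : IsPrimitiveRoot ω N)
    (g : (Fin n → ℂ) → ℂ) :
    ∏ ζ ∈ torus n N, g ζ = ∏ v : Fin n → ZMod N, g fun j => ω ^ (v j).val := by
  classical
  have himage : torus n N = univ.image fun (v : Fin n → ZMod N) j => ω ^ (v j).val := by
    rw [torus, hω.nthRootsFinset_eq_image, Fintype.piFinset_image, Fintype.piFinset_univ]
  have hinj : Function.Injective fun (v : Fin n → ZMod N) j => ω ^ (v j).val :=
    Function.Injective.piMap fun _ => hω.pow_val_injective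
  rw [himage, prod_image hinj.injOn]

section LaurentPolynomial

variable {n : ℕ} (E : Finset (Fin n → ℤ)) (c : (Fin n → ℤ) → ℕ)

theorem WevalUnits_eq_Weval (ξ : Fin n → ℂˣ) : WevalUnits E c ξ = Weval E c fun j => ξ j := by
  simp only [WevalUnits, Weval, Nat.cast_mul, Units.val_zpow_eq_zpow_val]

theorem map_WevalUnits {R S : Type*} [CommRing R] [CommRing S] (φ : R →+* S) (ξ : Fin n → Rˣ) :
    φ (WevalUnits E c ξ) = WevalUnits E c fun j => Units.map (φ : R →* S) (ξ j) := by
  simp only [WevalUnits, map_sum, map_mul, map_natCast, map_prod, ← map_zpow, Units.coe_map,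
    MonoidHom.coe_coe]

/-- `∏_{v ∈ (ℤ/N)^n} (z - W(X^v))`, with the exponents of `W(X^v)` reduced mod `N` so that it
is a polynomial. -/
noncomputable def torusPoly (z : ℤ) (N : ℕ) [NeZero N] : ℤ[X] :=
  ∏ v : Fin n → ZMod N, ((z : ℤ[X]) - ∑ e ∈ E, ∑ f ∈ E,
    ((c e * c f : ℕ) : ℤ[X]) * ∏ j, X ^ (v j * ((e j - f j : ℤ) : ZMod N)).val)

theorem aeval_torusPoly (z : ℤ) {N : ℕ} [NeZero N] {R : Type*} [CommRing R] {u : Rˣ}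
    (hu : u ^ N = 1) :
    aeval (u : R) (torusPoly E c z N) =
      ∏ v : Fin n → ZMod N, ((z : R) - WevalUnits E c fun j => u ^ (v j).val) := by
  have hpow (v : ZMod N) (m : ℤ) : (u : R) ^ (v * (m : ZMod N)).val = ↑((u ^ v.val) ^ m) := by
    rw [← zpow_natCast u, ← zpow_mul, zpow_eq_pow_val_intCast hu, Units.val_pow_eq_pow_val]
    push_cast
    rw [ZMod.natCast_zmod_val]
  simp only [torusPoly, WevalUnits, map_prod, map_sub, map_intCast, map_sum, map_mul,
    map_natCast, map_pow, aeval_X, hpow]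

theorem aeval_torusPoly_eq_prod_torus (z : ℤ) {N : ℕ} [NeZero N] {ω : ℂ}
    (hω : IsPrimitiveRoot ω N) :
    aeval ω (torusPoly E c z N) = ∏ ζ ∈ torus n N, ((z : ℂ) - Weval E c ζ) := by
  have hω₁ : (hω.isUnit (NeZero.ne N)).unit ^ N = 1 := Units.ext (by simp [hω.pow_eq_one])
  rw [← (hω.isUnit (NeZero.ne N)).unit_spec, aeval_torusPoly E c z hω₁,
    prod_torus_eq_prod_zmod hω]
  simp [WevalUnits_eq_Weval]

theorem card_WevalUnits_eq {K : Type*} [CommRing K] [DecidableEq K] [Finite Kˣ] {g : Kˣ}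
    (hg : IsPrimitiveRoot g (Nat.card Kˣ)) [NeZero (Nat.card Kˣ)] (a : K) :
    Nat.card {ξ : Fin n → Kˣ // WevalUnits E c ξ = a} =
      #{v : Fin n → ZMod (Nat.card Kˣ) | WevalUnits E c (fun j => g ^ (v j).val) = a} := by
  let e := Equiv.piCongrRight fun _ : Fin n => Equiv.ofBijective _ hg.pow_val_bijective
  rw [← Nat.card_congr (e.subtypeEquiv fun v => Iff.rfl), Nat.card_eq_fintype_card,
    Fintype.card_subtype]
  rfl

end LaurentPolynomial

theorem pow_card_solutions_dvd_BN_general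
    (n : ℕ) (E : Finset (Fin n → ℤ)) (c : (Fin n → ℤ) → ℕ)
    (p : ℕ) [Fact p.Prime] (ν : ℕ) (hν : 1 ≤ ν) (z : ℤ)
    (M : ℕ)
    (hM : M = Nat.card {ξ : Fin n → (GaloisField p ν)ˣ //
      WevalUnits E c ξ = (z : GaloisField p ν)})
    (b : ℤ) (hb : (b : ℂ) = ∏ ζ ∈ torus n (p ^ ν - 1), ((z : ℂ) - Weval E c ζ)) :
    (p : ℤ) ^ M ∣ b := by
  classical
  set K := GaloisField p ν
  have hN : Nat.card Kˣ = p ^ ν - 1 := by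
    rw [Nat.card_units, GaloisField.card p ν (by omega)]
  have : NeZero (Nat.card Kˣ) := ⟨Nat.card_pos.ne'⟩
  obtain ⟨g, hg⟩ := IsCyclic.exists_isPrimitiveRoot_natCard Kˣ
  let u : (WittVector p K)ˣ := Units.map (WittVector.teichmuller p) g
  have hu : IsPrimitiveRoot u (Nat.card Kˣ) :=
    hg.map_of_injective (Units.map_injective (WittVector.teichmuller_injective p))
  have hbu : ∏ v : Fin n → ZMod (Nat.card Kˣ),
      ((z : WittVector p K) - WevalUnits E c fun j => u ^ (v j).val) = b := by
    have hω := Complex.isPrimitiveRoot_exp _ (NeZero.ne (Nat.card Kˣ))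
    rw [← aeval_torusPoly E c z hu.pow_eq_one]
    refine aeval_eq_intCast_of_aeval_cyclotomic_eq_zero hω ?_
      (IsPrimitiveRoot.coe_units_iff.mpr hu).aeval_cyclotomic_eq_zero
    rw [aeval_torusPoly_eq_prod_torus E c z hω, hN, hb]
  have hred : Units.map (WittVector.constantCoeff : WittVector p K →+* K) u = g :=
    Units.ext (WittVector.constantCoeff_teichmuller p (g : K))
  rw [hM, card_WevalUnits_eq E c hg, ← WittVector.pow_p_dvd_intCast_iff (k := K), ← hbu]
  refine pow_card_filter_dvd_prod fun v _ hv => ?_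
  rw [WittVector.p_dvd_iff_constantCoeff_eq_zero, map_sub, map_intCast, map_WevalUnits]
  simp only [map_pow, hred, hv, sub_self]

/-- p-adic valuation versus point counts over finite fields: `p^M` divides the integer
`B_{p^ν - 1}(z)`, where `M` is the number of points `ξ ∈ ((𝔽_{p^ν})^×)^n` with `W̄(ξ) = z̄`. -/
theorem pow_card_solutions_dvd_BN
    (n : ℕ) (hn : 1 ≤ n) (E : Finset (Fin n → ℤ)) (c : (Fin n → ℤ) → ℕ)
    (hc : ∀ e ∈ E, 0 < c e)
    (hgen : AddSubgroup.closure {v : Fin n → ℤ | ∃ e ∈ E, ∃ f ∈ E, v = e - f} = ⊤)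
    (p : ℕ) [Fact p.Prime] (ν : ℕ) (hν : 1 ≤ ν) (z : ℤ)
    (M : ℕ)
    (hM : M = Nat.card {ξ : Fin n → (GaloisField p ν)ˣ //
      WevalUnits E c ξ = (z : GaloisField p ν)})
    (b : ℤ) (hb : (b : ℂ) = ∏ ζ ∈ torus n (p ^ ν - 1), ((z : ℂ) - Weval E c ζ)) :
    (p : ℤ) ^ M ∣ b :=
  pow_card_solutions_dvd_BN_general n E c p ν hν z M hM b hb
end

section
/- (Lemma: Gauss-type congruences for the moments.) For every prime number p and all integers k ≥ 0 and α ≥ 0, one has m_{k p^{α+1}} ≡ m_{k p^{α}} (mod p^{α+1}), where m_j ∈ ℤ denotes the constant term of the Laurent polynomial W^j. -/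
open scoped BigOperators

/-- The Laurent polynomial `W = ∑_{e,f ∈ E} c_e c_f u^{e-f}`, as an element of the group
algebra `ℤ[ℤ^n]` (the ring of Laurent polynomials in `n` variables over `ℤ`). -/
noncomputable def WL {n : ℕ} (E : Finset (Fin n → ℤ)) (c : (Fin n → ℤ) → ℕ) :
    AddMonoidAlgebra ℤ (Fin n → ℤ) :=
  ∑ e ∈ E, ∑ f ∈ E, AddMonoidAlgebra.single (e - f) ((c e : ℤ) * (c f : ℤ))

/-- The `k`-th moment `m_k`: the constant term of the Laurent polynomial `W^k`. -/
noncomputable def moment {n : ℕ} (E : Finset (Fin n → ℤ)) (c : (Fin n → ℤ) → ℕ)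
    (k : ℕ) : ℤ :=
  (WL E c ^ k).coeff 0

/-!
Let `ψ = dilate p` be the ring endomorphism of `ℤ[G]` that multiplies exponents by `p`. By the
binomial theorem and Fermat's little theorem on the coefficients, `x ^ p ≡ ψ x (mod p)` for every
`x`, and the usual lifting argument upgrades this to `x ^ (p ^ (α + 1)) ≡ ψ (x ^ p ^ α)` modulo
`p ^ (α + 1)`. When `G` is torsion-free, `ψ` does not change constant terms; taking `x = W ^ k`
gives the congruence for the moments.
-/

theorem natCast_dvd_add_pow_prime_sub {A F : Type*} [CommRing A] [FunLike F A A]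
    [AddHomClass F A A] {p : ℕ} (hp : p.Prime) (φ : F) {x y : A}
    (hx : (p : A) ∣ x ^ p - φ x) (hy : (p : A) ∣ y ^ p - φ y) :
    (p : A) ∣ (x + y) ^ p - φ (x + y) := by
  obtain ⟨r, hr⟩ := exists_add_pow_prime_eq hp x y
  have h : (x + y) ^ p - φ (x + y) = (x ^ p - φ x) + (y ^ p - φ y) + p * (x * y * r) := by
    rw [hr, map_add]
    ring
  rw [h]
  exact dvd_add (dvd_add hx hy) (dvd_mul_right _ _)

namespace AddMonoidAlgebra

theorem natCast_dvd_coeff {R M : Type*} [Semiring R] [AddMonoid M] {m : ℕ} {y : R[M]}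
    (h : (m : R[M]) ∣ y) (g : M) : (m : R) ∣ y.coeff g := by
  obtain ⟨z, rfl⟩ := h
  rw [natCast_def, coeff_single_zero_mul]
  exact dvd_mul_right _ _

variable {G : Type*} [AddCommMonoid G]

noncomputable def dilate (p : ℕ) : ℤ[G] →+* ℤ[G] :=
  mapDomainRingHom ℤ (DistribSMul.toAddMonoidHom G p)

theorem dilate_single (p : ℕ) (g : G) (r : ℤ) : dilate p (single g r) = single (p • g) r := by
  simp [dilate]

theorem coeff_zero_dilate [IsAddTorsionFree G] {p : ℕ} (hp : p ≠ 0) (x : ℤ[G]) :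
    (dilate p x).coeff 0 = x.coeff 0 := by
  have h := Finsupp.mapDomain_apply (nsmul_right_injective hp) x.coeff 0
  rw [smul_zero] at h
  rwa [dilate, mapDomainRingHom_apply, coeff_mapDomain]

theorem natCast_dvd_single {p : ℕ} {r : ℤ} (h : (p : ℤ) ∣ r) (g : G) :
    (p : ℤ[G]) ∣ single g r := by
  obtain ⟨s, rfl⟩ := h
  exact ⟨single g s, by rw [natCast_def, single_mul_single, zero_add]⟩

theorem natCast_dvd_pow_sub_dilate {p : ℕ} (hp : p.Prime) (x : ℤ[G]) :
    (p : ℤ[G]) ∣ x ^ p - dilate p x := by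
  induction x using induction_linear with
  | zero => simp [hp.ne_zero]
  | add x y hx hy => exact natCast_dvd_add_pow_prime_sub hp (dilate p) hx hy
  | single g r =>
    rw [single_pow, dilate_single, ← single_sub]
    exact natCast_dvd_single (Int.ModEq.pow_prime_eq_self hp r).symm.dvd _

theorem natCast_pow_dvd_coeff_zero_pow_sub [IsAddTorsionFree G] {p : ℕ} (hp : p.Prime)
    (x : ℤ[G]) (α : ℕ) :
    (p : ℤ) ^ (α + 1) ∣ (x ^ p ^ (α + 1)).coeff 0 - (x ^ p ^ α).coeff 0 := by
  have h := dvd_sub_pow_of_dvd_sub (natCast_dvd_pow_sub_dilate hp x) α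
  rw [← pow_mul, ← pow_succ', ← map_pow (dilate p), ← Nat.cast_pow] at h
  have h0 := natCast_dvd_coeff h 0
  rwa [coeff_sub, Finsupp.sub_apply, coeff_zero_dilate hp.ne_zero, Nat.cast_pow] at h0

end AddMonoidAlgebra

theorem moment_gauss_congruence_general
    (n : ℕ) (E : Finset (Fin n → ℤ)) (c : (Fin n → ℤ) → ℕ)
    (p : ℕ) (hp : p.Prime) (k α : ℕ) :
    (p : ℤ) ^ (α + 1) ∣
      moment E c (k * p ^ (α + 1)) - moment E c (k * p ^ α) := by
  simpa only [moment, pow_mul] using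
    AddMonoidAlgebra.natCast_pow_dvd_coeff_zero_pow_sub hp (WL E c ^ k) α

/-- Gauss-type congruences for the moments: `m_{k p^{α+1}} ≡ m_{k p^α} (mod p^{α+1})`. -/
theorem moment_gauss_congruence
    (n : ℕ) (hn : 1 ≤ n) (E : Finset (Fin n → ℤ)) (c : (Fin n → ℤ) → ℕ)
    (hc : ∀ e ∈ E, 0 < c e)
    (hgen : AddSubgroup.closure {v : Fin n → ℤ | ∃ e ∈ E, ∃ f ∈ E, v = e - f} = ⊤)
    (p : ℕ) (hp : p.Prime) (k α : ℕ) :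
    (p : ℤ) ^ (α + 1) ∣
      moment E c (k * p ^ (α + 1)) - moment E c (k * p ^ α) :=
  moment_gauss_congruence_general n E c p hp k α
end

section
/- (Corollary, integrality of the expansion of zQ(z).) The formal power series exp(Σ_{k≥1} (m_k/k) t^k) ∈ ℚ[[t]] has all of its coefficients in ℤ; i.e. there exist integers A_k (k ≥ 1) with exp(Σ_{k≥1} (m_k/k) t^k) = 1 + Σ_{k≥1} A_k t^k. -/
/-!
The moments `m_k = [u⁰] W^k` satisfy the Gauss congruences `p^(a+1) ∣ m (p^(a+1) u) - m (p^a u)`.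
In `ℤ[ℤⁿ]` the Frobenius lift `ψ_p : u^g ↦ u^(p g)` satisfies `W^p ≡ ψ_p W (mod p)`, which lifts to
`W^(p^(a+1)) ≡ ψ_p (W^(p^a)) (mod p^(a+1))`, and `ψ_p` preserves constant terms because `ℤⁿ` is
torsion-free.

By Möbius inversion the Gauss congruences say exactly that `m_k = ∑_{j ∣ k} j b_j` with integers
`b_j`. Then `exp (∑ m_k t^k / k)` and the Euler product `∏_{j ≤ N} (1 - t^j)^(-b_j)` both solve
`F' = F a` for series `a` that agree below degree `N`, so their coefficients agree up to degree `N`;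
the product has integer coefficients.
-/

open scoped BigOperators

/-- The exponential `exp(S) = ∑_j S^j / j!` of a power series `S` (with zero constant term);
since `coeff N (S^j) = 0` for `j > N` when `S` has zero constant term, the `N`-th coefficient
is given by the finite sum below. -/
noncomputable def expOf (S : PowerSeries ℚ) : PowerSeries ℚ :=
  PowerSeries.mk fun N =>
    ∑ j ∈ Finset.range (N + 1), (PowerSeries.coeff N (S ^ j)) / (j.factorial : ℚ)

open Finset

def SatisfiesGaussCongruences (m : ℕ → ℤ) : Prop :=
  ∀ ⦃p : ℕ⦄, p.Prime → ∀ a u : ℕ, (p : ℤ) ^ (a + 1) ∣ m (p ^ (a + 1) * u) - m (p ^ a * u)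

namespace SatisfiesGaussCongruences

open ArithmeticFunction
open scoped ArithmeticFunction.Moebius

variable {m : ℕ → ℤ}

lemma prime_pow_dvd_sum_moebius (hm : SatisfiesGaussCongruences m) {p u : ℕ} (hp : p.Prime)
    (hpu : ¬ p ∣ u) (a : ℕ) :
    (p : ℤ) ^ a ∣ ∑ d ∈ (p ^ a * u).divisors, μ d * m (p ^ a * u / d) := by
  cases a with
  | zero => exact one_dvd _
  | succ a =>
  have hcop : (p ^ (a + 1)).Coprime u := (hp.coprime_iff_not_dvd.2 hpu).pow_left _
  rw [Nat.divisors_mul, Finset.mul_def, sum_image hcop.mul_injOn_divisors, sum_product,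
    Nat.sum_divisors_prime_pow hp, sum_comm]
  refine dvd_sum fun y hy => ?_
  have hyu : y ∣ u := Nat.dvd_of_mem_divisors hy
  have hμ (i : ℕ) : (μ (p ^ i * y) : ℤ) = μ (p ^ i) * μ y :=
    isMultiplicative_moebius.map_mul_of_coprime
      ((hp.coprime_iff_not_dvd.2 fun h => hpu (h.trans hyu)).pow_left _)
  have hdiv (i : ℕ) (hi : i ≤ a + 1) :
      p ^ (a + 1) * u / (p ^ i * y) = p ^ (a + 1 - i) * (u / y) := by
    rw [Nat.mul_div_mul_comm (pow_dvd_pow p hi) hyu, Nat.pow_div hi hp.pos]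
  -- only the squarefree parts `y` and `p * y` contribute
  dsimp only
  rw [sum_range_succ', sum_range_succ', sum_eq_zero fun i _ => by
    rw [hμ, moebius_apply_prime_pow hp (by omega), if_neg (by omega), zero_mul, zero_mul]]
  rw [hμ, hμ, hdiv 1 (by omega), hdiv 0 (by omega), pow_one, moebius_apply_prime hp, pow_zero,
    moebius_apply_one, add_tsub_cancel_right, Nat.sub_zero]
  convert dvd_mul_of_dvd_right (hm hp a (u / y)) (μ y : ℤ) using 1
  ring

lemma dvd_sum_moebius (hm : SatisfiesGaussCongruences m) {k : ℕ} (hk : k ≠ 0) :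
    (k : ℤ) ∣ ∑ d ∈ k.divisors, μ d * m (k / d) := by
  rw [Int.natCast_dvd, Nat.dvd_iff_prime_pow_dvd_dvd]
  intro p i hp hpi
  obtain ⟨a, u, hpu, rfl⟩ := Nat.exists_eq_pow_mul_and_not_dvd hk p hp.ne_one
  have hia : p ^ i ∣ p ^ a := ((hp.coprime_iff_not_dvd.2 hpu).pow_left i).dvd_of_dvd_mul_right hpi
  have := hm.prime_pow_dvd_sum_moebius hp hpu a
  rw [← Int.natCast_pow, Int.natCast_dvd] at this
  exact hia.trans this

lemma exists_sum_divisors_mul_eq (hm : SatisfiesGaussCongruences m) :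
    ∃ b : ℕ → ℤ, ∀ k, 0 < k → ∑ j ∈ k.divisors, j * b j = m k := by
  refine ⟨fun k => (∑ d ∈ k.divisors, μ d * m (k / d)) / k,
    sum_eq_iff_sum_mul_moebius_eq.2 fun k hk => ?_⟩
  simp only [Int.cast_id]
  rw [Nat.sum_divisorsAntidiagonal (f := fun d e => (μ d : ℤ) * m e)]
  exact (Int.mul_ediv_cancel' (hm.dvd_sum_moebius hk.ne')).symm

end SatisfiesGaussCongruences

namespace AddMonoidAlgebra

variable {R G : Type*} [AddCommMonoid G]

variable (R) in
noncomputable def frobeniusLift [Semiring R] (p : ℕ) : R[G] →+* R[G] :=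
  mapDomainRingHom R (nsmulAddMonoidHom p)

@[simp]
lemma frobeniusLift_single [Semiring R] (p : ℕ) (g : G) (r : R) :
    frobeniusLift R p (single g r) = single (p • g) r := by
  simp [frobeniusLift]

lemma coeff_zero_frobeniusLift [Semiring R] [IsAddTorsionFree G] {p : ℕ} (hp : p ≠ 0)
    (x : R[G]) : (frobeniusLift R p x).coeff 0 = x.coeff 0 := by
  have := Finsupp.mapDomain_apply (f := nsmulAddMonoidHom (α := G) p)
    (nsmul_right_injective hp) x.coeff 0
  simpa [frobeniusLift] using this

lemma natCast_dvd_coeff_s9 [CommSemiring R] {n : ℕ} {x : R[G]} (h : (n : R[G]) ∣ x) (g : G) :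
    (n : R) ∣ x.coeff g := by
  obtain ⟨y, rfl⟩ := h
  rw [← nsmul_eq_mul, coeff_smul, Finsupp.smul_apply, nsmul_eq_mul]
  exact dvd_mul_right _ _

lemma natCast_dvd_pow_sub_frobeniusLift {p : ℕ} (hp : p.Prime) (x : ℤ[G]) :
    (p : ℤ[G]) ∣ x ^ p - frobeniusLift ℤ p x := by
  induction x using induction_linear with
  | zero => simp [zero_pow hp.ne_zero]
  | add x y hx hy =>
    obtain ⟨r, hr⟩ := exists_add_pow_prime_eq hp x y
    rw [hr, map_add]
    have : x ^ p + y ^ p + p * x * y * r - (frobeniusLift ℤ p x + frobeniusLift ℤ p y) =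
        (x ^ p - frobeniusLift ℤ p x) + (y ^ p - frobeniusLift ℤ p y) + p * (x * y * r) := by ring
    rw [this]
    exact dvd_add (dvd_add hx hy) (dvd_mul_right _ _)
  | single g r =>
    have : Fact p.Prime := ⟨hp⟩
    obtain ⟨s, hs⟩ : (p : ℤ) ∣ r ^ p - r := by
      rw [← ZMod.intCast_zmod_eq_zero_iff_dvd]
      simp
    rw [single_pow, frobeniusLift_single, ← single_sub, hs, natCast_def]
    exact ⟨single (p • g) s, by rw [single_mul_single, zero_add]⟩

theorem satisfiesGaussCongruences_coeff_zero_pow [IsAddTorsionFree G] (W : ℤ[G]) :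
    SatisfiesGaussCongruences fun k => (W ^ k).coeff 0 := by
  intro p hp a u
  have h := (dvd_sub_pow_of_dvd_sub (natCast_dvd_pow_sub_frobeniusLift hp W) a).trans
    (sub_dvd_pow_sub_pow _ _ u)
  have hpow : ((W ^ p) ^ p ^ a) ^ u = W ^ (p ^ (a + 1) * u) := by
    rw [← pow_mul, ← pow_mul, pow_succ', mul_assoc]
  have hfrob : (frobeniusLift ℤ p W ^ p ^ a) ^ u = frobeniusLift ℤ p (W ^ (p ^ a * u)) := by
    rw [← pow_mul, map_pow]
  rw [hpow, hfrob, ← Nat.cast_pow] at h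
  have := natCast_dvd_coeff_s9 h 0
  rw [coeff_sub, Finsupp.sub_apply, coeff_zero_frobeniusLift hp.ne_zero] at this
  exact_mod_cast this

end AddMonoidAlgebra

theorem Nat.sum_range_ite_succ_dvd {M : Type*} [AddCommMonoid M] (f : ℕ → M) {n N : ℕ}
    (hn : 0 < n) (hnN : n ≤ N) :
    ∑ i ∈ range N, (if i + 1 ∣ n then f (i + 1) else 0) = ∑ d ∈ n.divisors, f d := by
  rw [sum_ite, sum_const_zero, add_zero]
  refine sum_nbij' (· + 1) (· - 1) (fun i hi => ?_) (fun d hd => ?_) (fun i _ => rfl)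
    (fun d hd => Nat.sub_add_cancel (Nat.pos_of_mem_divisors hd)) (fun i _ => rfl)
  · rw [mem_filter, mem_range] at hi
    exact Nat.mem_divisors.2 ⟨hi.2, hn.ne'⟩
  · rw [mem_filter, mem_range, Nat.sub_add_cancel (Nat.pos_of_mem_divisors hd)]
    exact ⟨by have := Nat.divisor_le hd; omega, Nat.dvd_of_mem_divisors hd⟩

namespace PowerSeries

variable {R : Type*} [CommRing R]

theorem coeff_eq_of_derivative_eq_mul [IsAddTorsionFree R] {f g a b : R⟦X⟧}
    (hf : d⁄dX R f = f * a) (hg : d⁄dX R g = g * b) (h0 : coeff 0 f = coeff 0 g)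
    {M : ℕ} (hab : ∀ k < M, coeff k a = coeff k b) : ∀ n ≤ M, coeff n f = coeff n g := by
  intro n hn
  induction n using Nat.strong_induction_on with
  | _ n ih =>
  cases n with
  | zero => exact h0
  | succ n =>
  have hcoeff (h : R⟦X⟧) : (n + 1) • coeff (n + 1) h = coeff n (d⁄dX R h) := by
    rw [coeff_derivative, nsmul_eq_mul, mul_comm, Nat.cast_succ]
  refine nsmul_right_injective n.succ_ne_zero ?_
  simp only [hcoeff, hf, hg, coeff_mul]
  refine sum_congr rfl fun ij hij => ?_
  rw [HasAntidiagonal.mem_antidiagonal] at hij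
  rw [ih ij.1 (by omega) (by omega), hab ij.2 (by omega)]

theorem derivative_map {S : Type*} [CommRing S] (φ : R →+* S) (f : R⟦X⟧) :
    d⁄dX S (map φ f) = map φ (d⁄dX R f) := by
  ext n
  simp [coeff_derivative]

noncomputable def logDeriv (u : R⟦X⟧ˣ) : R⟦X⟧ := ↑u⁻¹ * d⁄dX R u

theorem derivative_eq_mul_logDeriv (u : R⟦X⟧ˣ) : d⁄dX R u = u * logDeriv u := by
  rw [logDeriv, ← mul_assoc, Units.mul_inv, one_mul]

theorem logDeriv_mul (u v : R⟦X⟧ˣ) : logDeriv (u * v) = logDeriv u + logDeriv v := by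
  simp only [logDeriv, mul_inv_rev, Units.val_mul, Derivation.leibniz, smul_eq_mul]
  linear_combination (↑v⁻¹ * d⁄dX R v) * u.inv_mul + (↑u⁻¹ * d⁄dX R u) * v.inv_mul

theorem logDeriv_prod_zpow {ι : Type*} (s : Finset ι) (u : ι → R⟦X⟧ˣ) (z : ι → ℤ) :
    logDeriv (∏ i ∈ s, u i ^ z i) = ∑ i ∈ s, z i • logDeriv (u i) := by
  let logDerivHom : R⟦X⟧ˣ →* Multiplicative R⟦X⟧ :=
    MonoidHom.mk' (fun u => .ofAdd (logDeriv u)) logDeriv_mul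
  exact congrArg Multiplicative.toAdd (map_prod logDerivHom _ s) |>.trans <| by
    simp only [toAdd_prod, map_zpow, toAdd_zpow]
    rfl

noncomputable def geomUnit (j : ℕ) [NeZero j] : R⟦X⟧ˣ :=
  Units.mkOfMulEqOne (expand j (NeZero.ne j) (mk 1)) (1 - X ^ j) <| by
    simpa using congrArg (expand j (NeZero.ne j)) (mk_one_mul_one_sub_eq_one R)

theorem logDeriv_geomUnit (j : ℕ) [NeZero j] :
    logDeriv (geomUnit j : R⟦X⟧ˣ) =
      (j : R⟦X⟧) * X ^ (j - 1) * ((geomUnit j : R⟦X⟧ˣ) : R⟦X⟧) := by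
  have hinv : ((geomUnit j)⁻¹ : R⟦X⟧ˣ) = (1 - X ^ j : R⟦X⟧) := rfl
  have h := congrArg (d⁄dX R) (geomUnit j : R⟦X⟧ˣ).mul_inv
  rw [hinv, Derivation.leibniz, Derivation.map_one_eq_zero, map_sub, Derivation.map_one_eq_zero,
    derivative_pow, derivative_X, smul_eq_mul, smul_eq_mul] at h
  rw [logDeriv, hinv]
  linear_combination h

theorem coeff_logDeriv_geomUnit (j : ℕ) [NeZero j] (k : ℕ) :
    coeff k (logDeriv (geomUnit j : R⟦X⟧ˣ)) = if j ∣ k + 1 then (j : R) else 0 := by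
  rw [logDeriv_geomUnit, mul_assoc, ← map_natCast (C (R := R)), coeff_C_mul, coeff_X_pow_mul']
  simp only [geomUnit, Units.val_mkOfMulEqOne, coeff_expand, coeff_mk, Pi.one_apply]
  by_cases hjk : j - 1 ≤ k
  · have hdvd : j ∣ k - (j - 1) ↔ j ∣ k + 1 := by
      rw [show k + 1 = k - (j - 1) + j by have := NeZero.pos j; omega, Nat.dvd_add_self_right]
    simp [hjk, hdvd]
  · have hndvd : ¬ j ∣ k + 1 := fun h => hjk (by have := Nat.le_of_dvd k.succ_pos h; omega)
    simp [hjk, hndvd]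

/-- `∏_{j ≤ M} (1 - X^j)^(-b j)` -/
noncomputable def eulerProduct (b : ℕ → ℤ) (M : ℕ) : R⟦X⟧ˣ :=
  ∏ i ∈ range M, geomUnit (i + 1) ^ b (i + 1)

theorem constantCoeff_eulerProduct (b : ℕ → ℤ) (M : ℕ) :
    constantCoeff ((eulerProduct b M : R⟦X⟧ˣ) : R⟦X⟧) = 1 := by
  have hgeom (i : ℕ) : Units.map constantCoeff.toMonoidHom (geomUnit (i + 1) : R⟦X⟧ˣ) = 1 :=
    Units.ext (by simp [geomUnit])
  suffices Units.map constantCoeff.toMonoidHom (eulerProduct b M : R⟦X⟧ˣ) = 1 by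
    simpa using congrArg Units.val this
  rw [eulerProduct, map_prod]
  exact prod_eq_one fun i _ => by rw [map_zpow, hgeom, one_zpow]

theorem coeff_logDeriv_eulerProduct (b : ℕ → ℤ) {k M : ℕ} (hk : k < M) :
    coeff k (logDeriv (eulerProduct b M : R⟦X⟧ˣ)) =
      ((∑ j ∈ (k + 1).divisors, j * b j : ℤ) : R) := by
  simp only [eulerProduct, logDeriv_prod_zpow, map_sum, map_zsmul, coeff_logDeriv_geomUnit,
    smul_ite, smul_zero]
  rw [Nat.sum_range_ite_succ_dvd (fun j => b j • (j : R)) k.succ_pos hk]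
  push_cast
  simp [zsmul_eq_mul, mul_comm]

end PowerSeries

open PowerSeries

theorem expOf_eq_subst_exp {S : ℚ⟦X⟧} (hS : constantCoeff S = 0) :
    expOf S = (exp ℚ).subst S := by
  ext N
  have hvanish (j : ℕ) (hj : N < j) : coeff N (S ^ j) = 0 :=
    X_pow_dvd_iff.1 (pow_dvd_pow_of_dvd (X_dvd_iff.2 hS) j) N hj
  rw [expOf, coeff_mk, coeff_subst' (HasSubst.of_constantCoeff_zero' hS),
    finsum_eq_sum_of_support_subset (s := range (N + 1))]
  · refine sum_congr rfl fun j _ => ?_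
    simp [coeff_exp, div_eq_inv_mul]
  · intro j hj
    rw [coe_range, Set.mem_Iio]
    by_contra h
    exact hj (by dsimp only; rw [hvanish j (by omega), smul_zero])

theorem derivative_expOf {S : ℚ⟦X⟧} (hS : constantCoeff S = 0) :
    d⁄dX ℚ (expOf S) = expOf S * d⁄dX ℚ S := by
  rw [expOf_eq_subst_exp hS, derivative_subst (HasSubst.of_constantCoeff_zero' hS),
    derivative_exp]

theorem SatisfiesGaussCongruences.exists_expOf_eq_mk_intCast {m : ℕ → ℤ}
    (hm : SatisfiesGaussCongruences m) :
    ∃ A : ℕ → ℤ, A 0 = 1 ∧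
      expOf (mk fun k => if k = 0 then 0 else (m k : ℚ) / k) = mk fun k => (A k : ℚ) := by
  obtain ⟨b, hb⟩ := hm.exists_sum_divisors_mul_eq
  set S : ℚ⟦X⟧ := mk fun k => if k = 0 then 0 else (m k : ℚ) / k
  have hS0 : constantCoeff S = 0 := by simp [S, ← coeff_zero_eq_constantCoeff_apply]
  have hS' (k : ℕ) : coeff k (d⁄dX ℚ S) = m (k + 1) := by
    rw [coeff_derivative, coeff_mk, if_neg k.succ_ne_zero]
    push_cast
    field_simp
  refine ⟨fun N => coeff N ((eulerProduct b N : ℤ⟦X⟧ˣ) : ℤ⟦X⟧), by simp [eulerProduct], ?_⟩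
  ext N
  set F := map (Int.castRingHom ℚ) ((eulerProduct b N : ℤ⟦X⟧ˣ) : ℤ⟦X⟧)
  have hF : d⁄dX ℚ F = F * map (Int.castRingHom ℚ) (logDeriv (eulerProduct b N)) := by
    rw [derivative_map, derivative_eq_mul_logDeriv, map_mul]
  have h0 : coeff 0 (expOf S) = coeff 0 F := by
    rw [expOf, coeff_mk, coeff_map, coeff_zero_eq_constantCoeff_apply, constantCoeff_eulerProduct]
    simp
  rw [coeff_mk,
    coeff_eq_of_derivative_eq_mul (derivative_expOf hS0) hF h0 (fun k hk => ?_) N le_rfl]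
  · simp [F]
  · rw [hS', coeff_map, coeff_logDeriv_eulerProduct b hk, hb (k + 1) k.succ_pos]
    simp

theorem exp_moment_series_integral_coeffs_general
    (n : ℕ) (E : Finset (Fin n → ℤ)) (c : (Fin n → ℤ) → ℕ) :
    ∃ A : ℕ → ℤ, A 0 = 1 ∧
      expOf (PowerSeries.mk fun k => if k = 0 then 0 else (moment E c k : ℚ) / (k : ℚ))
        = PowerSeries.mk fun k => (A k : ℚ) :=
  (AddMonoidAlgebra.satisfiesGaussCongruences_coeff_zero_pow (WL E c)).exists_expOf_eq_mk_intCast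

/-- Integrality of the coefficients of `exp(∑_{k≥1} (m_k/k) t^k) ∈ ℚ[[t]]`: there are
integers `A_k` with `exp(∑_{k≥1} (m_k/k) t^k) = 1 + ∑_{k≥1} A_k t^k`. -/
theorem exp_moment_series_integral_coeffs
    (n : ℕ) (hn : 1 ≤ n) (E : Finset (Fin n → ℤ)) (c : (Fin n → ℤ) → ℕ)
    (hc : ∀ e ∈ E, 0 < c e)
    (hgen : AddSubgroup.closure {v : Fin n → ℤ | ∃ e ∈ E, ∃ f ∈ E, v = e - f} = ⊤) :
    ∃ A : ℕ → ℤ, A 0 = 1 ∧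
      expOf (PowerSeries.mk fun k => if k = 0 then 0 else (moment E c k : ℚ) / (k : ℚ))
        = PowerSeries.mk fun k => (A k : ℚ) :=
  exp_moment_series_integral_coeffs_general n E c
end

section
/- (Honeycomb example: the moments.) For every integer k ≥ 0, the constant term of the Laurent polynomial ((u_1 + u_2 + 1)(u_1^{−1} + u_2^{−1} + 1))^k ∈ ℤ[u_1^{±1}, u_2^{±1}] equals Σ_{j=0}^{k} binom(k, j)² · binom(2j, j). -/
/-!
Write `W = A · Ā` with `A = u₁ + u₂ + 1` and `Ā` the same polynomial in `u₁⁻¹, u₂⁻¹`.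
The monomials of `Aᵏ` are `u₁ᵃ u₂ⁱ⁻ᵃ` (`a ≤ i ≤ k`), pairwise distinct, with trinomial
coefficients `C(k,i) C(i,a)`, and `Āᵏ` has the same coefficients on the inverse monomials.
Hence the constant term of `Wᵏ = Aᵏ Āᵏ` is `∑ (C(k,i) C(i,a))²`, and Vandermonde's
`∑ₐ C(i,a)² = C(2i,i)` gives the formula.
-/

open Finset AddMonoidAlgebra

/-- The honeycomb Laurent polynomial `W(u₁,u₂) = (u₁ + u₂ + 1)(u₁⁻¹ + u₂⁻¹ + 1)`, as an
element of the group algebra `ℤ[ℤ²]` (Laurent polynomials in two variables over `ℤ`). -/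
noncomputable def Whoneycomb : AddMonoidAlgebra ℤ (Fin 2 → ℤ) :=
  (AddMonoidAlgebra.single (![1, 0] : Fin 2 → ℤ) 1
    + AddMonoidAlgebra.single (![0, 1] : Fin 2 → ℤ) 1
    + AddMonoidAlgebra.single (0 : Fin 2 → ℤ) 1) *
  (AddMonoidAlgebra.single (![-1, 0] : Fin 2 → ℤ) 1
    + AddMonoidAlgebra.single (![0, -1] : Fin 2 → ℤ) 1
    + AddMonoidAlgebra.single (0 : Fin 2 → ℤ) 1)

namespace AddMonoidAlgebra

variable {R G : Type*}

theorem single_add_single_add_one_pow [CommSemiring R] [AddCommMonoid G] (v w : G) (k : ℕ) :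
    (single v 1 + single w 1 + 1 : AddMonoidAlgebra R G) ^ k =
      ∑ i ∈ range (k + 1), ∑ a ∈ range (i + 1),
        single (a • v + (i - a) • w) ((k.choose i : R) * i.choose a) := by
  rw [add_pow]
  refine sum_congr rfl fun i _ => ?_
  rw [one_pow, mul_one, add_pow, sum_mul]
  refine sum_congr rfl fun a _ => ?_
  rw [single_pow, single_pow, one_pow, one_pow, single_mul_single, one_mul, natCast_def,
    natCast_def, single_mul_single, single_mul_single, add_zero, add_zero, one_mul, mul_comm]

/-- Only the diagonal terms `single (e i) (c i) * single (-e i) (d i)` reach the exponent `0`. -/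
theorem coeff_zero_sum_single_mul_sum_single_neg [Semiring R] [AddGroup G] {ι : Type*}
    (s : Finset ι) {e : ι → G} (he : Set.InjOn e s) (c d : ι → R) :
    ((∑ i ∈ s, single (e i) (c i)) * ∑ j ∈ s, single (-e j) (d j)).coeff 0 =
      ∑ i ∈ s, c i * d i := by
  classical
  simp only [sum_mul_sum, single_mul_single, coeff_sum, Finsupp.finsetSum_apply, coeff_single,
    Finsupp.single_apply, add_neg_eq_zero]
  refine sum_congr rfl fun i hi => ?_
  rw [sum_eq_single_of_mem i hi, if_pos rfl]
  intro j hj hji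
  exact if_neg fun h => hji (he hj hi h.symm)

end AddMonoidAlgebra

/-- The exponent of `u₁ᵃ u₂ⁱ⁻ᵃ`, indexed by `⟨i, a⟩`. -/
def honeycombExponent (p : (_ : ℕ) × ℕ) : Fin 2 → ℤ :=
  p.2 • ![1, 0] + (p.1 - p.2) • ![0, 1]

theorem injOn_honeycombExponent (k : ℕ) :
    Set.InjOn honeycombExponent ((range (k + 1)).sigma fun i => range (i + 1)) := by
  rintro ⟨i, a⟩ hp ⟨i', a'⟩ hp' h
  have h0 := congrFun h 0
  have h1 := congrFun h 1
  simp only [coe_sigma, Set.mem_sigma_iff, coe_range, Set.mem_Iio] at hp hp'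
  simp [honeycombExponent] at h0 h1
  obtain rfl : a = a' := by omega
  obtain rfl : i = i' := by omega
  rfl

/-- Honeycomb example: the constant term of `W^k = ((u₁+u₂+1)(u₁⁻¹+u₂⁻¹+1))^k` equals
`∑_{j=0}^k binom(k,j)² binom(2j,j)`. -/
theorem honeycomb_moments (k : ℕ) :
    (Whoneycomb ^ k).coeff 0
      = ∑ j ∈ Finset.range (k + 1),
          (k.choose j : ℤ) ^ 2 * ((2 * j).choose j : ℤ) := by
  set S := (range (k + 1)).sigma fun i => range (i + 1)
  set c := fun p : (_ : ℕ) × ℕ => (k.choose p.1 : ℤ) * p.1.choose p.2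
  have hA : (single (![1, 0] : Fin 2 → ℤ) 1 + single ![0, 1] 1 + single 0 1) ^ k =
      ∑ p ∈ S, single (honeycombExponent p) (c p) := by
    rw [← one_def, single_add_single_add_one_pow, sum_sigma]
    rfl
  have hB : (single (![-1, 0] : Fin 2 → ℤ) 1 + single ![0, -1] 1 + single 0 1) ^ k =
      ∑ p ∈ S, single (-honeycombExponent p) (c p) := by
    rw [← one_def, single_add_single_add_one_pow, sum_sigma]
    refine sum_congr rfl fun i _ => sum_congr rfl fun a _ => ?_
    congr 1
    ext j; fin_cases j <;> simp [honeycombExponent]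
  rw [Whoneycomb, mul_pow, hA, hB,
    coeff_zero_sum_single_mul_sum_single_neg S (injOn_honeycombExponent k), sum_sigma]
  refine sum_congr rfl fun i _ => ?_
  rw [← Nat.sum_range_choose_sq, Nat.cast_sum, mul_sum]
  refine sum_congr rfl fun a _ => ?_
  push_cast [c]
  ring
end
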